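/- Let ω̄ be a non-integer real number, a real, and define I(Φ) = exp(i(ω̄Φ + a·sinΦ)) and the constant C = i·∑_{n=−∞}^{∞} J_n(a)/(ω̄ + n). Then the function ψ̄(Φ) = exp(−i(ω̄Φ + a·sinΦ))·[C − ∫₀^Φ I(Φ')dΦ'] solves the ODE dψ̄/dΦ + i(ω̄ + a·cosΦ)·ψ̄ = −1 and is 2π-periodic: ψ̄(Φ + 2π) = ψ̄(Φ) for all Φ. -/

import Mathlib

/-- Bessel function of the first kind of integer order `n`,
via the Bessel integral representation. -/
noncomputable def besselJ (n : ℤ) (z : ℝ) : ℝ :=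
  (1 / Real.pi) * ∫ θ in (0:ℝ)..Real.pi, Real.cos (n * θ - z * Real.sin θ)

/-- Integrating factor `I(Φ) = exp(i(ω̄Φ + a sinΦ))`. -/
noncomputable def intFac (ω a : ℝ) (Φ : ℝ) : ℂ :=
  Complex.exp (Complex.I * ((ω : ℂ) * (Φ : ℂ) + (a : ℂ) * (Real.sin Φ : ℂ)))

/-- `ψ̄(Φ) = exp(−i(ω̄Φ + a sinΦ))·(C − ∫₀^Φ I)`, with
`C = i ∑_{n∈ℤ} J_n(a)/(ω̄+n)`. -/
noncomputable def psiBar (ω a : ℝ) (Φ : ℝ) : ℂ :=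
  Complex.exp (-(Complex.I * ((ω : ℂ) * (Φ : ℂ) + (a : ℂ) * (Real.sin Φ : ℂ)))) *
    ((Complex.I * ∑' n : ℤ, (besselJ n a : ℂ) / ((ω : ℂ) + (n : ℂ))) -
      ∫ Φ' in (0:ℝ)..Φ, intFac ω a Φ')

/-!
Since `I(Φ + 2π) = e^{2πiω̄} I(Φ)`, periodicity of `ψ̄ = I⁻¹ (C - ∫₀^Φ I)` amounts to
`∫₀^{2π} I = (1 - e^{2πiω̄}) C`. This follows by integrating termwise the Jacobi–Anger
expansion `e^{ia sin Φ} = ∑ₙ Jₙ(a) e^{inΦ}`, the `n`-th term contributing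
`Jₙ(a) (e^{2πiω̄} - 1) / (i(ω̄ + n))`; the expansion converges absolutely because the Fourier coefficients of a `C²` periodic function
are `O(1/n²)` (integrate by parts twice). The ODE is the product rule for `I⁻¹ · (C - ∫₀^Φ I)`.
-/

open Complex MeasureTheory Function
open scoped Real Interval

theorem Function.Periodic.deriv {𝕜 E : Type*} [NontriviallyNormedField 𝕜] [NormedAddCommGroup E]
    [NormedSpace 𝕜 E] {f : 𝕜 → E} {c : 𝕜} (hf : Periodic f c) : Periodic (deriv f) c := by
  intro x
  have hf' : (fun y => f (y + c)) = f := funext hf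
  rw [← deriv_comp_add_const, hf']

theorem fourierCoeffOn_eq_mul_fourierCoeffOn_deriv {a b : ℝ} (hab : a < b) {f f' : ℝ → ℂ} {n : ℤ}
    (hn : n ≠ 0) (hf : ∀ x ∈ [[a, b]], HasDerivAt f (f' x) x)
    (hf' : IntervalIntegrable f' volume a b) (hfab : f b = f a) :
    fourierCoeffOn hab f n = (b - a) / (2 * π * I * n) * fourierCoeffOn hab f' n := by
  rw [fourierCoeffOn_of_hasDerivAt hab hn hf hf', hfab, sub_self, mul_zero, zero_sub]
  have : (n : ℂ) ≠ 0 := by exact_mod_cast hn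
  field_simp

theorem norm_fourierCoeffOn_le {E : Type*} [NormedAddCommGroup E] [NormedSpace ℂ E] {a b : ℝ}
    (hab : a < b) {f : ℝ → E} {M : ℝ} (hM : ∀ x ∈ Set.Ioc a b, ‖f x‖ ≤ M) (n : ℤ) :
    ‖fourierCoeffOn hab f n‖ ≤ M := by
  have hba : 0 < b - a := sub_pos.mpr hab
  have hint : ‖∫ x in a..b, fourier (-n) (x : AddCircle (b - a)) • f x‖ ≤ M * (b - a) := by
    refine (intervalIntegral.norm_integral_le_of_norm_le_const fun x hx => ?_).trans_eq
      (by rw [abs_of_pos hba])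
    rw [norm_smul, fourier_apply, Circle.norm_coe, one_mul]
    exact hM x (Set.uIoc_of_le hab.le ▸ hx)
  rw [fourierCoeffOn_eq_integral, norm_smul, Real.norm_eq_abs, abs_of_pos (by positivity)]
  calc 1 / (b - a) * ‖∫ x in a..b, fourier (-n) (x : AddCircle (b - a)) • f x‖
      ≤ 1 / (b - a) * (M * (b - a)) := by gcongr
    _ = M := by field_simp

section
variable {T : ℝ} [hT : Fact (0 < T)]

theorem fourierCoeff_lift_eq {E : Type*} [NormedAddCommGroup E] [NormedSpace ℂ E] {f : ℝ → E}
    (hf : Periodic f T) (n : ℤ) : fourierCoeff hf.lift n = fourierCoeffOn hT.out f n := by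
  rw [fourierCoeff_eq_intervalIntegral _ n 0, fourierCoeffOn_eq_integral, zero_add, sub_zero]
  simp only [hf.lift_coe]

theorem exists_norm_fourierCoeffOn_le_of_contDiff {f : ℝ → ℂ} (hf : ContDiff ℝ 2 f)
    (hper : Periodic f T) : ∃ C, ∀ n : ℤ, n ≠ 0 → ‖fourierCoeffOn hT.out f n‖ ≤ C / n ^ 2 := by
  obtain ⟨hf1, -, hf'⟩ := contDiff_succ_iff_deriv.mp (show ContDiff ℝ (1 + 1) f from hf)
  have hf'1 : Differentiable ℝ (deriv f) := hf'.differentiable one_ne_zero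
  have hf'' : Continuous (deriv (deriv f)) := hf'.continuous_deriv le_rfl
  obtain ⟨M, hM⟩ := (isCompact_Icc (a := (0 : ℝ)) (b := T)).exists_bound_of_continuousOn
    hf''.continuousOn
  refine ⟨(T / (2 * π)) ^ 2 * M, fun n hn => ?_⟩
  have step : ∀ g : ℝ → ℂ, Differentiable ℝ g → Continuous (deriv g) → Periodic g T →
      fourierCoeffOn hT.out g n = T / (2 * π * I * n) * fourierCoeffOn hT.out (deriv g) n :=
    fun g hg hg' hper => by
      simpa using fourierCoeffOn_eq_mul_fourierCoeffOn_deriv hT.out hn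
        (fun x _ => (hg x).hasDerivAt) (hg'.intervalIntegrable _ _) (by simpa using hper 0)
  rw [step f hf1 hf'.continuous hper, step _ hf'1 hf'' hper.deriv, ← mul_assoc, norm_mul]
  have hnorm : ‖T / (2 * π * I * n) * (T / (2 * π * I * n))‖ = (T / (2 * π)) ^ 2 / n ^ 2 := by
    simp [← sq, abs_of_pos hT.out, abs_of_pos Real.pi_pos, div_pow, mul_pow, div_div]
  rw [hnorm, div_mul_eq_mul_div]
  gcongr
  exact norm_fourierCoeffOn_le _ (fun x hx => hM x (Set.Ioc_subset_Icc_self hx)) n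

theorem summable_norm_fourierCoeffOn_of_contDiff {f : ℝ → ℂ} (hf : ContDiff ℝ 2 f)
    (hper : Periodic f T) : Summable fun n => ‖fourierCoeffOn hT.out f n‖ := by
  obtain ⟨C, hC⟩ := exists_norm_fourierCoeffOn_le_of_contDiff hf hper
  refine .of_norm_bounded_eventually
    ((Real.summable_one_div_int_pow.mpr one_lt_two).mul_left C) ?_
  filter_upwards [(Set.finite_singleton (0 : ℤ)).compl_mem_cofinite] with n hn
  simpa [div_eq_mul_inv] using hC n hn

theorem hasSum_fourierCoeffOn_of_contDiff {f : ℝ → ℂ} (hf : ContDiff ℝ 2 f)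
    (hper : Periodic f T) (x : ℝ) :
    HasSum (fun n => fourierCoeffOn hT.out f n * fourier n (x : AddCircle T)) (f x) := by
  let F : C(AddCircle T, ℂ) := ⟨hper.lift, continuous_coinduced_dom.mpr hf.continuous⟩
  have hcoeff : fourierCoeff F = fourierCoeffOn hT.out f := funext (fourierCoeff_lift_eq hper)
  have hsum : Summable (fourierCoeff F) :=
    hcoeff ▸ (summable_norm_fourierCoeffOn_of_contDiff hf hper).of_norm
  have h := has_pointwise_sum_fourier_series_of_summable hsum x
  rw [hcoeff] at h
  simpa [F, hper.lift_coe] using h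

end

instance : Fact (0 < 2 * π) := ⟨Real.two_pi_pos⟩

theorem integral_exp_eq_two_pi_mul_besselJ (n : ℤ) (a : ℝ) :
    ∫ x in (0)..2 * π, exp (-(↑(n * x - a * Real.sin x) * I)) = ↑(2 * π * besselJ n a) := by
  set θ : ℝ → ℝ := fun x => n * x - a * Real.sin x
  have hθ : ∀ x, exp (-(↑(θ (2 * π - x)) * I)) = exp (↑(θ x) * I) := fun x => by
    have : -(↑(θ (2 * π - x)) * I) = ↑(θ x) * I + (-n : ℤ) * (2 * π * I) := by
      simp only [θ, Real.sin_two_pi_sub]; push_cast; ring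
    rw [this, exp_add, exp_int_mul_two_pi_mul_I, mul_one]
  have hcont : Continuous fun x => exp (-(↑(θ x) * I)) := by fun_prop
  -- `x ↦ 2π - x` sends `θ` to `2πn - θ`: the half over `[π, 2π]` is the conjugate of the other.
  calc ∫ x in (0)..2 * π, exp (-(↑(θ x) * I))
      = (∫ x in (0)..π, exp (-(↑(θ x) * I))) + ∫ x in π..2 * π, exp (-(↑(θ x) * I)) :=
        (intervalIntegral.integral_add_adjacent_intervals (hcont.intervalIntegrable _ _)
          (hcont.intervalIntegrable _ _)).symm
    _ = ∫ x in (0)..π, (exp (-(↑(θ x) * I)) + exp (↑(θ x) * I)) := by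
        have hflip := intervalIntegral.integral_comp_sub_left (a := 0) (b := π)
          (fun x => exp (-(↑(θ x) * I))) (2 * π)
        simp only [hθ, sub_zero, show 2 * π - π = π by ring] at hflip
        rw [intervalIntegral.integral_add (hcont.intervalIntegrable _ _)
          ((by fun_prop : Continuous fun x => exp (↑(θ x) * I)).intervalIntegrable _ _), hflip]
    _ = ∫ x in (0)..π, ((2 * Real.cos (θ x) : ℝ) : ℂ) := by
        refine intervalIntegral.integral_congr fun x _ => ?_
        push_cast
        rw [two_cos, add_comm, neg_mul]
    _ = ↑(2 * π * besselJ n a) := by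
        rw [intervalIntegral.integral_ofReal, intervalIntegral.integral_const_mul, besselJ]
        field_simp
        rfl

theorem fourierCoeffOn_exp_mul_sin (a : ℝ) (n : ℤ) :
    fourierCoeffOn Real.two_pi_pos (fun x => exp (↑(a * Real.sin x) * I)) n = besselJ n a := by
  have hintegrand : ∀ x ∈ [[0, 2 * π]], fourier (-n) (x : AddCircle (2 * π - 0)) •
      exp (↑(a * Real.sin x) * I) = exp (-(↑(n * x - a * Real.sin x) * I)) := fun x _ => by
    rw [fourier_coe_apply, smul_eq_mul, ← exp_add]
    congr 1
    push_cast
    field_simp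
    ring
  rw [fourierCoeffOn_eq_integral, intervalIntegral.integral_congr hintegrand,
    integral_exp_eq_two_pi_mul_besselJ, sub_zero, real_smul]
  push_cast
  field_simp

theorem contDiff_exp_mul_sin (a : ℝ) : ContDiff ℝ 2 fun x => exp (↑(a * Real.sin x) * I) :=
  ((ofRealCLM.contDiff.comp (contDiff_const.mul Real.contDiff_sin)).mul contDiff_const).cexp

theorem periodic_exp_mul_sin (a : ℝ) : Periodic (fun x => exp (↑(a * Real.sin x) * I)) (2 * π) :=
  fun x => by simp only [Real.sin_add_two_pi]

theorem summable_norm_besselJ (a : ℝ) : Summable fun n : ℤ => ‖(besselJ n a : ℂ)‖ := by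
  simpa only [fourierCoeffOn_exp_mul_sin] using
    summable_norm_fourierCoeffOn_of_contDiff (contDiff_exp_mul_sin a) (periodic_exp_mul_sin a)

theorem hasSum_besselJ_mul_exp (a x : ℝ) :
    HasSum (fun n : ℤ => besselJ n a * exp (n * x * I)) (exp (↑(a * Real.sin x) * I)) := by
  have h := hasSum_fourierCoeffOn_of_contDiff (contDiff_exp_mul_sin a) (periodic_exp_mul_sin a) x
  simp only [fourierCoeffOn_exp_mul_sin, fourier_coe_apply] at h
  convert h using 4
  push_cast
  field_simp

theorem integral_exp_mul_exp_int_mul_I {ω : ℝ} {n : ℤ} (hωn : (ω + n : ℂ) ≠ 0) :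
    ∫ x in (0)..2 * π, exp (ω * x * I) * exp (n * x * I) =
      (1 - exp (2 * π * ω * I)) * (I / (ω + n)) := by
  have hI : I * (ω + n) ≠ 0 := mul_ne_zero I_ne_zero hωn
  have hperiod : exp (I * (ω + n) * ↑(2 * π)) = exp (2 * π * ω * I) := by
    rw [show I * (ω + n) * ↑(2 * π) = 2 * π * ω * I + n * (2 * π * I) by push_cast; ring,
      exp_add, exp_int_mul_two_pi_mul_I, mul_one]
  simp_rw [← exp_add, show ∀ x : ℂ, ω * x * I + n * x * I = I * (ω + n) * x from fun x => by ring]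
  rw [integral_exp_mul_complex hI, hperiod, ofReal_zero, mul_zero, exp_zero]
  field_simp
  rw [I_sq]
  ring

theorem integral_exp_mul_of_hasSum_fourier {c : ℤ → ℂ} (hc : Summable fun n => ‖c n‖)
    {f : ℝ → ℂ} (hf : ∀ x : ℝ, HasSum (fun n => c n * exp (n * x * I)) (f x)) {ω : ℝ}
    (hω : ∀ n : ℤ, ω ≠ n) :
    ∫ x in (0)..2 * π, exp (ω * x * I) * f x =
      (1 - exp (2 * π * ω * I)) * (I * ∑' n, c n / (ω + n)) := by
  have hterm : ∀ n : ℤ, ∫ x in (0)..2 * π, exp (ω * x * I) * (c n * exp (n * x * I)) =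
      (1 - exp (2 * π * ω * I)) * (I * (c n / (ω + n))) := fun n => by
    have hωn : (ω + n : ℂ) ≠ 0 := by
      rw [← ofReal_intCast, ← ofReal_add, ofReal_ne_zero, ← sub_neg_eq_add, sub_ne_zero]
      exact_mod_cast hω (-n)
    simp_rw [mul_left_comm _ (c n)]
    rw [intervalIntegral.integral_const_mul, integral_exp_mul_exp_int_mul_I hωn]
    ring
  have hsum := intervalIntegral.hasSum_integral_of_dominated_convergence (μ := volume)
    (a := 0) (b := 2 * π) (F := fun n x => exp (ω * x * I) * (c n * exp (n * x * I)))
    (fun n _ => ‖c n‖) (fun n => (by fun_prop : Continuous _).aestronglyMeasurable)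
    (fun n => ae_of_all _ fun x _ => by simp [norm_exp])
    (ae_of_all _ fun _ _ => hc) intervalIntegrable_const
    (ae_of_all _ fun x _ => (hf x).mul_left _)
  simp only [hterm] at hsum
  rw [← hsum.tsum_eq, tsum_mul_left, tsum_mul_left]

noncomputable def psiConst (ω a : ℝ) : ℂ := I * ∑' n : ℤ, (besselJ n a : ℂ) / (ω + n)

theorem intFac_eq_exp_mul_exp (ω a x : ℝ) :
    intFac ω a x = exp (ω * x * I) * exp (↑(a * Real.sin x) * I) := by
  rw [intFac, ← exp_add]
  push_cast
  ring_nf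

theorem integral_intFac_two_pi {ω : ℝ} (a : ℝ) (hω : ∀ n : ℤ, ω ≠ n) :
    ∫ x in (0)..2 * π, intFac ω a x = (1 - exp (2 * π * ω * I)) * psiConst ω a := by
  simp_rw [intFac_eq_exp_mul_exp]
  exact integral_exp_mul_of_hasSum_fourier (summable_norm_besselJ a) (hasSum_besselJ_mul_exp a) hω

theorem intFac_add_two_pi (ω a x : ℝ) :
    intFac ω a (x + 2 * π) = exp (2 * π * ω * I) * intFac ω a x := by
  rw [intFac, intFac, ← exp_add, Real.sin_add_two_pi]
  push_cast
  ring_nf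

theorem integral_zero_add_period_of_quasiperiodic {g : ℝ → ℂ}
    (hg : ∀ u v, IntervalIntegrable g volume u v) {T : ℝ} {c : ℂ}
    (h : ∀ x, g (x + T) = c * g x) (x : ℝ) :
    ∫ t in (0)..x + T, g t = (∫ t in (0)..T, g t) + c * ∫ t in (0)..x, g t := by
  have hshift : ∫ t in (0)..x, g (t + T) = ∫ t in T..x + T, g t := by
    simp [intervalIntegral.integral_comp_add_right]
  rw [← intervalIntegral.integral_add_adjacent_intervals (hg 0 T) (hg T (x + T)), ← hshift]
  simp only [h, intervalIntegral.integral_const_mul]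

theorem psiBar_eq_inv_mul (ω a Φ : ℝ) :
    psiBar ω a Φ = (intFac ω a Φ)⁻¹ * (psiConst ω a - ∫ x in (0)..Φ, intFac ω a x) := by
  rw [psiBar, intFac, exp_neg]
  rfl

theorem psiBar_add_two_pi {ω : ℝ} (a : ℝ) (hω : ∀ n : ℤ, ω ≠ n) (Φ : ℝ) :
    psiBar ω a (Φ + 2 * π) = psiBar ω a Φ := by
  have hcont : Continuous (intFac ω a) := by unfold intFac; fun_prop
  rw [psiBar_eq_inv_mul, psiBar_eq_inv_mul, intFac_add_two_pi,
    integral_zero_add_period_of_quasiperiodic (fun u v => hcont.intervalIntegrable u v)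
      (intFac_add_two_pi ω a), integral_intFac_two_pi a hω]
  have : intFac ω a Φ ≠ 0 := exp_ne_zero _
  field_simp
  ring

theorem hasDerivAt_intFac (ω a Φ : ℝ) :
    HasDerivAt (intFac ω a) (I * (ω + a * Real.cos Φ) * intFac ω a Φ) Φ := by
  have hphase : HasDerivAt (fun x : ℝ => I * ((ω : ℂ) * x + a * (Real.sin x : ℂ)))
      (I * (ω + a * Real.cos Φ)) Φ := by
    simpa using (((hasDerivAt_id Φ).ofReal_comp.const_mul (ω : ℂ)).add
      ((Real.hasDerivAt_sin Φ).ofReal_comp.const_mul (a : ℂ))).const_mul I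
  rw [mul_comm]
  exact hphase.cexp

theorem hasDerivAt_psiBar (ω a Φ : ℝ) :
    HasDerivAt (psiBar ω a) (-(I * (ω + a * Real.cos Φ)) * psiBar ω a Φ - 1) Φ := by
  have hcont : Continuous (intFac ω a) := by unfold intFac; fun_prop
  have hint : HasDerivAt (fun x => ∫ t in (0)..x, intFac ω a t) (intFac ω a Φ) Φ :=
    intervalIntegral.integral_hasDerivAt_right (hcont.intervalIntegrable _ _)
      (hcont.stronglyMeasurableAtFilter _ _) hcont.continuousAt
  have hne : intFac ω a Φ ≠ 0 := exp_ne_zero _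
  rw [show psiBar ω a = _ from funext (psiBar_eq_inv_mul ω a)]
  refine (((hasDerivAt_intFac ω a Φ).inv hne).mul
    ((hasDerivAt_const Φ (psiConst ω a)).sub hint)).congr_deriv ?_
  simp only [Pi.sub_apply, Pi.inv_apply]
  field_simp
  ring

/-- For non-integer `ω̄`, `ψ̄` solves `dψ̄/dΦ + i(ω̄ + a cosΦ)ψ̄ = −1`
and is `2π`-periodic. -/
theorem stmt12 (ω a : ℝ) (hω : ∀ n : ℤ, ω ≠ (n : ℝ)) :
    (∀ Φ : ℝ, deriv (psiBar ω a) Φ +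
        Complex.I * ((ω : ℂ) + (a : ℂ) * (Real.cos Φ : ℂ)) * psiBar ω a Φ = -1) ∧
    (∀ Φ : ℝ, psiBar ω a (Φ + 2 * Real.pi) = psiBar ω a Φ) := by
  refine ⟨fun Φ => ?_, psiBar_add_two_pi a hω⟩
  rw [(hasDerivAt_psiBar ω a Φ).deriv]
  ring
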